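/- Assume Assumption (β) and let Ω ⊆ V. For every finitely supported f : V → ℂ with supp f ⊆ Ω and ‖f‖_{β⁺} = 1 one has 2 − √(4 − h̃(Ω)²) ≤ 2 Re (Δ̃f, f)_{β⁺} ≤ 2 + √(4 − h̃(Ω)²); in particular h̃(Ω) ≤ 2, so the square roots are of nonnegative numbers. -/

import Mathlib

/-
Write `D = Re (Δ̃f, f)`. Since `β⁺ = β⁻` and `‖f‖ = 1`, summing over edges gives
`2D = Σ b(x,y) |f x - f y|²` and `4 - 2D = Σ b(x,y) |f x + f y|²`. For `g = |f|`, the quantity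
`t = Σ b(x,y) (g x - g y)²` is at most both of these, while `Σ b(x,y) (g x + g y)² = 4 - t`, so by
Cauchy–Schwarz `Σ b(x,y) |g x² - g y²| ≤ √(t (4 - t))`. The co-area inequality bounds the same sum
from below by `h̃(Ω)`, so `(t - 2)² ≤ 4 - h̃(Ω)²`, and `t ≤ 2D ≤ 4 - t` gives the estimate.
The bound `h̃(Ω) ≤ 2` is `b(∂_E U) ≤ β⁺(U) + β⁻(U) = 2 β⁺(U)`.
-/

open Function Complex

noncomputable def betaPlus {V : Type*} (b : V → V → ℝ) (x : V) : ℝ := ∑ᶠ y, b x y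
noncomputable def betaMinus {V : Type*} (b : V → V → ℝ) (x : V) : ℝ := ∑ᶠ y, b y x

/-- The Laplacian `Δf(x) = (1/m(x)) Σ_y b(x,y)(f(x) - f(y))`; the normalized Laplacian
`Δ̃` is the case `m = β⁺`. -/
noncomputable def lap {V : Type*} (b : V → V → ℝ) (m : V → ℝ) (f : V → ℂ) (x : V) : ℂ :=
  (1 / (m x : ℂ)) * ∑ᶠ y, (b x y : ℂ) * (f x - f y)

/-- The weighted inner product `(f,g)_w = Σ_x w(x) f(x) conj(g(x))`. -/
noncomputable def innerW {V : Type*} (w : V → ℝ) (f g : V → ℂ) : ℂ :=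
  ∑ᶠ x, (w x : ℂ) * f x * (starRingEnd ℂ) (g x)

/-- The total edge-boundary weight of a finite set `U`:
`b(∂_E U) = Σ_{x∈U, y∉U} b(x,y) + Σ_{x∉U, y∈U} b(x,y)`. -/
noncomputable def bdryWeight {V : Type*} [DecidableEq V] (b : V → V → ℝ) (U : Finset V) :
    ℝ :=
  ∑ x ∈ U, ∑ᶠ y, (if y ∈ U then 0 else b x y + b y x)

/-- The Cheeger constant of `Ω ⊆ V` with respect to the weight `w`:
`h(Ω) = inf { b(∂_E U) / w(U) : U ⊆ Ω finite nonempty }`. -/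
noncomputable def cheeger {V : Type*} [DecidableEq V] (b : V → V → ℝ) (w : V → ℝ)
    (Ω : Set V) : ℝ :=
  sInf {r : ℝ | ∃ U : Finset V, U.Nonempty ∧ ↑U ⊆ Ω ∧ r = bdryWeight b U / ∑ x ∈ U, w x}

/-- The bottom of the real part of the numerical range of the Dirichlet Laplacian on `Ω`:
`ν(Δ^D_Ω) = inf { Re (Δf, f)_m : f finitely supported, supp f ⊆ Ω, ‖f‖_m = 1 }`. -/
noncomputable def nuD {V : Type*} (b : V → V → ℝ) (m : V → ℝ) (Ω : Set V) : ℝ :=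
  sInf {r : ℝ | ∃ f : V → ℂ, (support f).Finite ∧ support f ⊆ Ω ∧
    innerW m f f = 1 ∧ r = (innerW m (lap b m f) f).re}

open ComplexConjugate

section

variable {V : Type*}

def closedNbhd (b : V → V → ℝ) (S : Set V) : Set V :=
  S ∪ {y | ∃ x ∈ S, b x y ≠ 0 ∨ b y x ≠ 0}

variable {b : V → V → ℝ}

lemma subset_closedNbhd (S : Set V) : S ⊆ closedNbhd b S := Set.subset_union_left

lemma mem_closedNbhd_of_adj {S : Set V} {x y : V} (hx : x ∈ S) (hxy : b x y ≠ 0 ∨ b y x ≠ 0) :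
    y ∈ closedNbhd b S :=
  Or.inr ⟨x, hx, hxy⟩

lemma closedNbhd_mono {S S' : Set V} (h : S ⊆ S') : closedNbhd b S ⊆ closedNbhd b S' :=
  Set.union_subset_union h fun _ ⟨x, hx, hxy⟩ => ⟨x, h hx, hxy⟩

lemma finite_closedNbhd (hloc : ∀ x, {y | b x y ≠ 0 ∨ b y x ≠ 0}.Finite) {S : Set V}
    (hS : S.Finite) : (closedNbhd b S).Finite :=
  hS.union <| (hS.biUnion fun x _ => hloc x).subset fun _ ⟨_, hx, hxy⟩ => Set.mem_biUnion hx hxy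

lemma sum_betaPlus_mul_eq_sum_sum {T : Finset V} {φ : V → ℝ}
    (hT : closedNbhd b (support φ) ⊆ T) :
    ∑ x ∈ T, betaPlus b x * φ x = ∑ x ∈ T, ∑ y ∈ T, b x y * φ x := by
  refine Finset.sum_congr rfl fun x _ => ?_
  by_cases hx : φ x = 0
  · simp [hx]
  · rw [← Finset.sum_mul, betaPlus, finsum_eq_finsetSum_of_support_subset _ fun y hy =>
      hT (mem_closedNbhd_of_adj hx (Or.inl hy))]

lemma sum_betaMinus_mul_eq_sum_sum {T : Finset V} {φ : V → ℝ}
    (hT : closedNbhd b (support φ) ⊆ T) :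
    ∑ x ∈ T, betaMinus b x * φ x = ∑ x ∈ T, ∑ y ∈ T, b x y * φ y := by
  rw [Finset.sum_comm]
  refine Finset.sum_congr rfl fun y _ => ?_
  by_cases hy : φ y = 0
  · simp [hy]
  · rw [← Finset.sum_mul, betaMinus, finsum_eq_finsetSum_of_support_subset _ fun x hx =>
      hT (mem_closedNbhd_of_adj hy (Or.inr hx))]

lemma innerW_eq_sum (w : V → ℝ) (f : V → ℂ) {g : V → ℂ} {T : Finset V}
    (hg : support g ⊆ T) : innerW w f g = ∑ x ∈ T, (w x : ℂ) * f x * conj (g x) :=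
  finsum_eq_finsetSum_of_support_subset _ fun _ hx => hg fun hgx => hx (by simp [hgx])

lemma innerW_self_eq_sum (w : V → ℝ) {f : V → ℂ} {T : Finset V} (hf : support f ⊆ T) :
    innerW w f f = ((∑ x ∈ T, w x * ‖f x‖ ^ 2 : ℝ) : ℂ) := by
  simp [innerW_eq_sum w f hf, mul_assoc, Complex.mul_conj']

lemma innerW_lap_eq_sum_sum (m : V → ℝ) {f : V → ℂ} (hm : ∀ x, f x ≠ 0 → m x ≠ 0)
    {T : Finset V} (hT : closedNbhd b (support f) ⊆ T) :
    innerW m (lap b m f) f = ∑ x ∈ T, ∑ y ∈ T, (b x y : ℂ) * (f x - f y) * conj (f x) := by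
  rw [innerW_eq_sum m _ ((subset_closedNbhd _).trans hT)]
  refine Finset.sum_congr rfl fun x _ => ?_
  by_cases hx : f x = 0
  · simp [hx]
  have hsum : ∑ᶠ y, (b x y : ℂ) * (f x - f y) = ∑ y ∈ T, (b x y : ℂ) * (f x - f y) :=
    finsum_eq_finsetSum_of_support_subset _ fun y hy =>
      hT (mem_closedNbhd_of_adj hx (Or.inl fun h => hy (by simp [h])))
  have hmx : (m x : ℂ) ≠ 0 := Complex.ofReal_ne_zero.2 (hm x hx)
  rw [lap, hsum, ← Finset.sum_mul, one_div, mul_inv_cancel_left₀ hmx]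

lemma sum_mul_add_indicator {w : V → ℝ} {U T : Finset V} (hUT : U ⊆ T) (ψ : V → ℝ) (m : ℝ) :
    ∑ x ∈ T, w x * (ψ + (U : Set V).indicator fun _ => m) x =
      ∑ x ∈ T, w x * ψ x + m * ∑ x ∈ U, w x := by
  simp only [Pi.add_apply, mul_add, Finset.sum_add_distrib, ← Set.indicator_mul_right,
    Finset.sum_indicator_subset _ hUT, ← Finset.sum_mul, mul_comm m]

end

section

variable {V : Type*} [DecidableEq V] {b : V → V → ℝ} {w : V → ℝ}

lemma bdryWeight_nonneg (hb : ∀ x y, 0 ≤ b x y) (U : Finset V) : 0 ≤ bdryWeight b U :=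
  Finset.sum_nonneg fun x _ => finsum_nonneg fun y => by
    split_ifs
    exacts [le_rfl, add_nonneg (hb x y) (hb y x)]

lemma bdryWeight_le_sum_betaPlus_add_betaMinus (hb : ∀ x y, 0 ≤ b x y)
    (hloc : ∀ x, {y | b x y ≠ 0 ∨ b y x ≠ 0}.Finite) (U : Finset V) :
    bdryWeight b U ≤ ∑ x ∈ U, (betaPlus b x + betaMinus b x) := by
  refine Finset.sum_le_sum fun x _ => ?_
  have hout : HasFiniteSupport (b x) := (hloc x).subset fun _ hy => Or.inl hy
  have hin : HasFiniteSupport (b · x) := (hloc x).subset fun _ hy => Or.inr hy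
  have hfin : HasFiniteSupport fun y => b x y + b y x :=
    (hout.union hin).subset (support_add _ _)
  rw [betaPlus, betaMinus, ← finsum_add_distrib hout hin]
  refine finsum_le_finsum' (hfin.subset fun y hy => ?_) hfin fun y => ?_
  · by_cases hyU : y ∈ U <;> simp_all
  · split_ifs
    exacts [add_nonneg (hb x y) (hb y x), le_rfl]

lemma zero_mem_lowerBounds_cheeger (hb : ∀ x y, 0 ≤ b x y) (hw : ∀ x, 0 ≤ w x) (Ω : Set V) :
    0 ∈ lowerBounds {r : ℝ | ∃ U : Finset V, U.Nonempty ∧ ↑U ⊆ Ω ∧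
      r = bdryWeight b U / ∑ x ∈ U, w x} := fun _ ⟨U, _, _, hr⟩ =>
  hr ▸ div_nonneg (bdryWeight_nonneg hb U) (Finset.sum_nonneg fun x _ => hw x)

lemma cheeger_nonneg (hb : ∀ x y, 0 ≤ b x y) (hw : ∀ x, 0 ≤ w x) (Ω : Set V) :
    0 ≤ cheeger b w Ω :=
  Real.sInf_nonneg fun _ hr => zero_mem_lowerBounds_cheeger hb hw Ω hr

lemma cheeger_le_div (hb : ∀ x y, 0 ≤ b x y) (hw : ∀ x, 0 ≤ w x) {Ω : Set V}
    {U : Finset V} (hU : U.Nonempty) (hUΩ : ↑U ⊆ Ω) :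
    cheeger b w Ω ≤ bdryWeight b U / ∑ x ∈ U, w x :=
  csInf_le ⟨0, zero_mem_lowerBounds_cheeger hb hw Ω⟩ ⟨U, hU, hUΩ, rfl⟩

lemma cheeger_mul_sum_le_bdryWeight (hb : ∀ x y, 0 ≤ b x y) (hw : ∀ x, 0 < w x) {Ω : Set V}
    {U : Finset V} (hU : U.Nonempty) (hUΩ : ↑U ⊆ Ω) :
    cheeger b w Ω * ∑ x ∈ U, w x ≤ bdryWeight b U :=
  (le_div_iff₀ (Finset.sum_pos (fun x _ => hw x) hU)).1
    (cheeger_le_div hb (fun x => (hw x).le) hU hUΩ)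

lemma cheeger_le_of_forall_bdryWeight_le (hb : ∀ x y, 0 ≤ b x y) (hw : ∀ x, 0 ≤ w x)
    {Ω : Set V} {C : ℝ} (hC : 0 ≤ C)
    (h : ∀ U : Finset V, U.Nonempty → ↑U ⊆ Ω → bdryWeight b U ≤ C * ∑ x ∈ U, w x) :
    cheeger b w Ω ≤ C := by
  obtain hempty | ⟨_, U, hU, hUΩ, rfl⟩ := Set.eq_empty_or_nonempty {r : ℝ | ∃ U : Finset V,
    U.Nonempty ∧ ↑U ⊆ Ω ∧ r = bdryWeight b U / ∑ x ∈ U, w x}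
  · rwa [cheeger, hempty, Real.sInf_empty]
  · exact (cheeger_le_div hb hw hU hUΩ).trans
      (div_le_of_le_mul₀ (Finset.sum_nonneg fun x _ => hw x) hC (h U hU hUΩ))

lemma cheeger_le_two (hb : ∀ x y, 0 ≤ b x y) (hloc : ∀ x, {y | b x y ≠ 0 ∨ b y x ≠ 0}.Finite)
    (hβp : ∀ x, 0 < betaPlus b x) (hβ : ∀ x, betaPlus b x = betaMinus b x) (Ω : Set V) :
    cheeger b (betaPlus b) Ω ≤ 2 :=
  cheeger_le_of_forall_bdryWeight_le hb (fun x => (hβp x).le) zero_le_two fun U _ _ => by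
    simpa [← hβ, ← two_mul, Finset.mul_sum] using
      bdryWeight_le_sum_betaPlus_add_betaMinus hb hloc U

lemma bdryWeight_eq_sum_sum_abs_sub_indicator {U T : Finset V} (hU : closedNbhd b ↑U ⊆ ↑T) :
    bdryWeight b U = ∑ x ∈ T, ∑ y ∈ T,
      b x y * |(U : Set V).indicator 1 x - (U : Set V).indicator 1 y| := by
  let F : V → V → ℝ := fun x y => if x ∈ U ∧ y ∉ U then b x y else 0
  let G : V → V → ℝ := fun x y => if x ∈ U ∧ y ∉ U then b y x else 0
  have hUT : U ⊆ T := fun x hx => hU (subset_closedNbhd _ hx)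
  calc bdryWeight b U = ∑ x ∈ U, ∑ y ∈ T, (F x y + G x y) := by
        refine Finset.sum_congr rfl fun x hx => ?_
        rw [finsum_eq_finsetSum_of_support_subset _ fun y hy => ?_]
        · exact Finset.sum_congr rfl fun y _ => by by_cases hy : y ∈ U <;> simp [F, G, hx, hy]
        · by_cases hyU : y ∈ U
          · simp [hyU] at hy
          · refine hU (mem_closedNbhd_of_adj hx ?_)
            by_contra! h
            simp [hyU, h] at hy
    _ = ∑ x ∈ T, ∑ y ∈ T, (F x y + G x y) :=
        Finset.sum_subset hUT fun x _ hx => by simp [F, G, hx]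
    _ = ∑ x ∈ T, ∑ y ∈ T, (F x y + G y x) := by
        simp only [Finset.sum_add_distrib, add_right_inj]
        exact Finset.sum_comm
    _ = _ := by
        refine Finset.sum_congr rfl fun x _ => Finset.sum_congr rfl fun y _ => ?_
        by_cases hx : x ∈ U <;> by_cases hy : y ∈ U <;> simp [F, G, hx, hy]

lemma sum_sum_abs_sub_add_indicator {U T : Finset V} (hU : closedNbhd b ↑U ⊆ ↑T) {ψ : V → ℝ}
    (hψ : ∀ x, 0 ≤ ψ x) (hψU : support ψ ⊆ U) {m : ℝ} (hm : 0 ≤ m) :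
    ∑ x ∈ T, ∑ y ∈ T, b x y * |(ψ + (U : Set V).indicator fun _ => m) x -
        (ψ + (U : Set V).indicator fun _ => m) y| =
      ∑ x ∈ T, ∑ y ∈ T, b x y * |ψ x - ψ y| + m * bdryWeight b U := by
  have hψ' : ∀ x ∉ U, ψ x = 0 := fun x hx => Function.notMem_support.1 fun h => hx (hψU h)
  rw [bdryWeight_eq_sum_sum_abs_sub_indicator hU, Finset.mul_sum, ← Finset.sum_add_distrib]
  refine Finset.sum_congr rfl fun x _ => ?_
  rw [Finset.mul_sum, ← Finset.sum_add_distrib]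
  refine Finset.sum_congr rfl fun y _ => ?_
  by_cases hx : x ∈ U <;> by_cases hy : y ∈ U
  · simp [hx, hy]
  · simp [hx, hy, hψ' y hy, abs_of_nonneg (add_nonneg (hψ x) hm), abs_of_nonneg (hψ x)]
    ring
  · rw [abs_sub_comm, abs_sub_comm ((U : Set V).indicator 1 x)]
    simp [hx, hy, hψ' x hx, abs_of_nonneg (add_nonneg (hψ y) hm), abs_of_nonneg (hψ y)]
    ring
  · simp [hx, hy]

theorem cheeger_mul_sum_le_sum_sum_abs_sub (hb : ∀ x y, 0 ≤ b x y) (hw : ∀ x, 0 < w x)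
    {Ω : Set V} {T : Finset V} {φ : V → ℝ} (hφ : ∀ x, 0 ≤ φ x) (hφΩ : support φ ⊆ Ω)
    (hT : closedNbhd b (support φ) ⊆ T) :
    cheeger b w Ω * ∑ x ∈ T, w x * φ x ≤ ∑ x ∈ T, ∑ y ∈ T, b x y * |φ x - φ y| := by
  induction hn : (T.filter (φ · ≠ 0)).card using Nat.strong_induction_on generalizing φ with
  | _ n ih =>
  set U := T.filter (φ · ≠ 0)
  have hUφ : (U : Set V) = support φ := by
    ext x
    simpa [U] using fun hx => hT (subset_closedNbhd _ hx)
  obtain hU | hU := U.eq_empty_or_nonempty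
  · obtain rfl : φ = 0 := support_eq_empty_iff.1 (by rw [← hUφ, hU, Finset.coe_empty])
    simp
  obtain ⟨x₀, hx₀, hmin⟩ := U.exists_min_image φ hU
  -- Lowering `φ` by its least positive value on `U` shrinks the support and, by
  -- `sum_mul_add_indicator` and `sum_sum_abs_sub_add_indicator`, removes `φ x₀ • w(U)` on the
  -- left and `φ x₀ • b(∂_E U)` on the right.
  set ψ := φ - (U : Set V).indicator fun _ => φ x₀
  have hφU : ∀ x ∉ U, φ x = 0 := fun x hx =>
    Function.notMem_support.1 fun h => hx (Finset.mem_coe.1 (hUφ ▸ h))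
  have hψ : ∀ x, 0 ≤ ψ x := fun x => by
    by_cases hx : x ∈ U
    · simpa [ψ, hx] using hmin x hx
    · simp [ψ, hx, hφU x hx]
  have hψU : support ψ ⊆ ↑(U.erase x₀) := fun x hx => by
    by_cases hxU : x ∈ U
    · refine Finset.mem_erase.2 ⟨?_, hxU⟩
      rintro rfl
      simp [ψ, hxU] at hx
    · simp [ψ, hxU, hφU x hxU] at hx
  have hlt : (T.filter (ψ · ≠ 0)).card < n := by
    refine hn ▸ (Finset.card_le_card fun x hx => ?_).trans_lt (Finset.card_erase_lt_of_mem hx₀)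
    exact hψU (Finset.mem_filter.1 hx).2
  have hψU' : support ψ ⊆ U := hψU.trans (Finset.coe_subset.2 (U.erase_subset x₀))
  have hIH := ih _ hlt hψ (hψU'.trans (hUφ ▸ hφΩ)) ((closedNbhd_mono hψU').trans (hUφ ▸ hT)) rfl
  have hUbdry := cheeger_mul_sum_le_bdryWeight hb hw hU (hUφ ▸ hφΩ)
  rw [show φ = ψ + (U : Set V).indicator fun _ => φ x₀ from (sub_add_cancel _ _).symm,
    sum_mul_add_indicator (Finset.filter_subset _ _),
    sum_sum_abs_sub_add_indicator (hUφ ▸ hT) hψ hψU' (hφ x₀), mul_add, mul_left_comm]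
  exact add_le_add hIH (mul_le_mul_of_nonneg_left hUbdry (hφ x₀))

end

lemma Complex.two_mul_re_sub_mul_conj (z w : ℂ) :
    2 * ((z - w) * conj z).re = ‖z - w‖ ^ 2 + ‖z‖ ^ 2 - ‖w‖ ^ 2 := by
  simp only [← Complex.normSq_eq_norm_sq, Complex.normSq_apply, Complex.mul_re, Complex.sub_re,
    Complex.sub_im, Complex.conj_re, Complex.conj_im]
  ring

theorem sq_sum_mul_abs_sq_sub_sq_le {ι : Type*} (s : Finset ι) {c a b : ι → ℝ}
    (hc : ∀ i ∈ s, 0 ≤ c i) (ha : ∑ i ∈ s, c i * a i ^ 2 = 1) (hb : ∑ i ∈ s, c i * b i ^ 2 = 1) :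
    (∑ i ∈ s, c i * |a i ^ 2 - b i ^ 2|) ^ 2 ≤
      (∑ i ∈ s, c i * (a i - b i) ^ 2) * (4 - ∑ i ∈ s, c i * (a i - b i) ^ 2) := by
  have hsum : ∑ i ∈ s, c i * (a i + b i) ^ 2 = 4 - ∑ i ∈ s, c i * (a i - b i) ^ 2 := by
    have : ∑ i ∈ s, c i * (a i + b i) ^ 2 =
        ∑ i ∈ s, (2 * (c i * a i ^ 2) + 2 * (c i * b i ^ 2) - c i * (a i - b i) ^ 2) :=
      Finset.sum_congr rfl fun i _ => by ring
    rw [this, Finset.sum_sub_distrib, Finset.sum_add_distrib, ← Finset.mul_sum, ← Finset.mul_sum,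
      ha, hb]
    ring
  rw [← hsum]
  refine Finset.sum_sq_le_sum_mul_sum_of_sq_le_mul s (fun i hi => ?_) (fun i hi => ?_)
    fun i _ => le_of_eq ?_
  · exact mul_nonneg (hc i hi) (sq_nonneg _)
  · exact mul_nonneg (hc i hi) (sq_nonneg _)
  · rw [mul_pow, sq_abs]
    ring

theorem abs_two_mul_re_sum_sub_two_le_sqrt {ι : Type*} (s : Finset ι) {c : ι → ℝ}
    (hc : ∀ i ∈ s, 0 ≤ c i) {u v : ι → ℂ} (hu : ∑ i ∈ s, c i * ‖u i‖ ^ 2 = 1)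
    (hv : ∑ i ∈ s, c i * ‖v i‖ ^ 2 = 1) {h : ℝ} (h0 : 0 ≤ h)
    (hh : h ≤ ∑ i ∈ s, c i * |‖u i‖ ^ 2 - ‖v i‖ ^ 2|) :
    |2 * (∑ i ∈ s, (c i : ℂ) * (u i - v i) * conj (u i)).re - 2| ≤ √(4 - h ^ 2) := by
  set D := (∑ i ∈ s, (c i : ℂ) * (u i - v i) * conj (u i)).re
  set t := ∑ i ∈ s, c i * (‖u i‖ - ‖v i‖) ^ 2
  have hD : 2 * D = ∑ i ∈ s, c i * ‖u i - v i‖ ^ 2 := by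
    have : 2 * D = ∑ i ∈ s, c i * (‖u i - v i‖ ^ 2 + ‖u i‖ ^ 2 - ‖v i‖ ^ 2) := by
      simp only [D, Complex.re_sum, Finset.mul_sum, mul_assoc, Complex.re_ofReal_mul,
        ← Complex.two_mul_re_sub_mul_conj]
      exact Finset.sum_congr rfl fun i _ => by ring
    simp only [this, mul_sub, mul_add, Finset.sum_sub_distrib, Finset.sum_add_distrib, hu, hv]
    ring
  have hD' : 4 - 2 * D = ∑ i ∈ s, c i * ‖u i + v i‖ ^ 2 := by
    have : ∑ i ∈ s, c i * ‖u i + v i‖ ^ 2 =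
        ∑ i ∈ s, (2 * (c i * ‖u i‖ ^ 2) + 2 * (c i * ‖v i‖ ^ 2) - c i * ‖u i - v i‖ ^ 2) :=
      Finset.sum_congr rfl fun i _ => by
        linear_combination c i * parallelogram_law_with_norm ℝ (u i) (v i)
    rw [this, Finset.sum_sub_distrib, Finset.sum_add_distrib, ← Finset.mul_sum, ← Finset.mul_sum,
      hu, hv, ← hD]
    ring
  have hsq (a b : ℂ) : (‖a‖ - ‖b‖) ^ 2 ≤ ‖a - b‖ ^ 2 :=
    sq_le_sq.2 (by simpa using abs_norm_sub_norm_le a b)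
  have ht : t ≤ 2 * D := by
    rw [hD]
    exact Finset.sum_le_sum fun i hi => mul_le_mul_of_nonneg_left (hsq _ _) (hc i hi)
  have ht' : t ≤ 4 - 2 * D := by
    rw [hD']
    refine Finset.sum_le_sum fun i hi => mul_le_mul_of_nonneg_left ?_ (hc i hi)
    simpa using hsq (u i) (-v i)
  have hCS := sq_sum_mul_abs_sq_sub_sq_le s hc hu hv
  have : |t - 2| ≤ √(4 - h ^ 2) := Real.abs_le_sqrt (by nlinarith)
  rw [abs_le] at this ⊢
  constructor <;> linarith

theorem fujiwara_estimate_general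
    (V : Type*) [DecidableEq V] (b : V → V → ℝ)
    (hb_nonneg : ∀ x y, 0 ≤ b x y)
    (hloc_fin : ∀ x, {y | b x y ≠ 0 ∨ b y x ≠ 0}.Finite)
    (hβp_pos : ∀ x, 0 < betaPlus b x)
    (hβ : ∀ x, betaPlus b x = betaMinus b x)
    (Ω : Set V) :
    cheeger b (betaPlus b) Ω ≤ 2 ∧
    ∀ f : V → ℂ, (support f).Finite → support f ⊆ Ω →
      innerW (betaPlus b) f f = 1 →
      2 - Real.sqrt (4 - (cheeger b (betaPlus b) Ω) ^ 2)
          ≤ 2 * (innerW (betaPlus b) (lap b (betaPlus b) f) f).re ∧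
      2 * (innerW (betaPlus b) (lap b (betaPlus b) f) f).re
          ≤ 2 + Real.sqrt (4 - (cheeger b (betaPlus b) Ω) ^ 2) := by
  refine ⟨cheeger_le_two hb_nonneg hloc_fin hβp_pos hβ Ω, fun f hfin hfΩ hnorm => ?_⟩
  set T := (finite_closedNbhd hloc_fin hfin).toFinset
  have hT : closedNbhd b (support f) ⊆ T := by simp [T]
  have hsupp : support (‖f ·‖ ^ 2) = support f := by ext; simp
  have hnorm' : ∑ x ∈ T, betaPlus b x * ‖f x‖ ^ 2 = 1 := by
    exact_mod_cast (innerW_self_eq_sum _ ((subset_closedNbhd _).trans hT)).symm.trans hnorm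
  have hu : ∑ p ∈ T ×ˢ T, b p.1 p.2 * ‖f p.1‖ ^ 2 = 1 := by
    simp only [Finset.sum_product]
    rw [← sum_betaPlus_mul_eq_sum_sum (hsupp ▸ hT), hnorm']
  have hv : ∑ p ∈ T ×ˢ T, b p.1 p.2 * ‖f p.2‖ ^ 2 = 1 := by
    simp only [Finset.sum_product]
    rw [← sum_betaMinus_mul_eq_sum_sum (hsupp ▸ hT), ← hnorm']
    simp only [hβ]
  have hcoarea := cheeger_mul_sum_le_sum_sum_abs_sub hb_nonneg hβp_pos (fun x => sq_nonneg ‖f x‖)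
    (hsupp ▸ hfΩ) (hsupp ▸ hT)
  rw [hnorm', mul_one, ← Finset.sum_product'] at hcoarea
  have key := abs_two_mul_re_sum_sub_two_le_sqrt (T ×ˢ T) (fun p _ => hb_nonneg p.1 p.2) hu hv
    (cheeger_nonneg hb_nonneg (fun x => (hβp_pos x).le) Ω) hcoarea
  simp only [Finset.sum_product] at key
  rw [← innerW_lap_eq_sum_sum _ (fun x _ => (hβp_pos x).ne') hT] at key
  exact ⟨by linarith [(abs_le.1 key).1], by linarith [(abs_le.1 key).2]⟩

/-- assume Assumption (β) and let `Ω ⊆ V`. For every finitely supported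
`f` supported in `Ω` with `‖f‖_{β⁺} = 1` one has
`2 − √(4 − h̃(Ω)²) ≤ 2 Re (Δ̃f, f)_{β⁺} ≤ 2 + √(4 − h̃(Ω)²)`; in particular `h̃(Ω) ≤ 2`. -/
theorem fujiwara_estimate
    (V : Type*) [Countable V] [DecidableEq V] (b : V → V → ℝ)
    (hb_nonneg : ∀ x y, 0 ≤ b x y)
    (hb_loop : ∀ x, b x x = 0)
    (hloc_fin : ∀ x, {y | b x y ≠ 0 ∨ b y x ≠ 0}.Finite)
    (hβp_pos : ∀ x, 0 < betaPlus b x)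
    (hβm_pos : ∀ x, 0 < betaMinus b x)
    (hβ : ∀ x, betaPlus b x = betaMinus b x)
    (Ω : Set V) :
    cheeger b (betaPlus b) Ω ≤ 2 ∧
    ∀ f : V → ℂ, (support f).Finite → support f ⊆ Ω →
      innerW (betaPlus b) f f = 1 →
      2 - Real.sqrt (4 - (cheeger b (betaPlus b) Ω) ^ 2)
          ≤ 2 * (innerW (betaPlus b) (lap b (betaPlus b) f) f).re ∧
      2 * (innerW (betaPlus b) (lap b (betaPlus b) f) f).re
          ≤ 2 + Real.sqrt (4 - (cheeger b (betaPlus b) Ω) ^ 2) :=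
  fujiwara_estimate_general V b hb_nonneg hloc_fin hβp_pos hβ Ω
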